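/- Let f₁, f₂ : ℝ → ℝ be continuous and 1-periodic with fᵢ(k) = −fᵢ(1/2 − k) for all k, and let a₁↑, a₁↓, a₂↑, a₂↓ ∈ ℝ. For i = 1,2 define hᵢ(k) = Σ_{σ∈{↑,↓}} [ (e^{fᵢ(k) − aᵢσ} + 1)^{−1} − (e^{−fᵢ(k) − aᵢσ} + 1)^{−1} ] and εᵢσ = ∫_{−1/2}^{1/2} (e^{fᵢ(k) − aᵢσ} + 1)^{−1} dk. If h₁(k) = h₂(k) for all k ∈ ℝ, ε₁↑ = ε₂↑ and ε₁↓ = ε₂↓, then f₁ = f₂, a₁↑ = a₂↑ and a₁↓ = a₂↓. (The map from a stationary state's parameters (f, a↑, a↓) to its conserved data (h, ε↑, ε↓) is one-to-one.) -/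

import Mathlib

/-- The conserved pointwise trace difference of the stationary state with
parameters `(f, aup, adown)`. -/
noncomputable def hTraceDiff (f : ℝ → ℝ) (aup adown : ℝ) (k : ℝ) : ℝ :=
  ((Real.exp (f k - aup) + 1)⁻¹ - (Real.exp (-f k - aup) + 1)⁻¹)
    + ((Real.exp (f k - adown) + 1)⁻¹ - (Real.exp (-f k - adown) + 1)⁻¹)

/-- The conserved spin occupation of the stationary state with parameters `(f, a)`. -/
noncomputable def spinOcc (f : ℝ → ℝ) (a : ℝ) : ℝ :=
  ∫ k in (-(1/2 : ℝ))..(1/2 : ℝ), (Real.exp (f k - a) + 1)⁻¹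

/-!
Write `x_σ = f₁ - a₁σ` and `y_σ = f₂ - a₂σ`. Since `fermi` is strictly decreasing,
`Q = Σ_σ fermiGap x_σ y_σ = Σ_σ (fermi y_σ - fermi x_σ) (x_σ - y_σ)` is a nonnegative continuous
1-periodic function. Splitting `x_σ - y_σ = (f₁ - f₂) - (a₁σ - a₂σ)`, the constant parts integrate
to zero because the spin occupations agree, while `(f₁ - f₂) (density₂ - density₁)` is odd about
`k = 1/4`: the first factor by the symmetry of `f₁, f₂`, and the second factor is even because the
trace differences agree. Hence `∫ Q = 0`, so `Q ≡ 0`, i.e. `x_σ = y_σ`; evaluating at `k = 1/4`,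
where `f₁ = f₂ = 0`, gives `a₁σ = a₂σ` and then `f₁ = f₂`.
-/

open intervalIntegral

section StrictAnti

variable {R : Type*} [Ring R] [LinearOrder R] [IsStrictOrderedRing R] {φ : R → R}

lemma StrictAnti.sub_mul_sub_pos (hφ : StrictAnti φ) {x y : R} (hxy : x ≠ y) :
    0 < (φ y - φ x) * (x - y) := by
  rcases hxy.lt_or_gt with h | h
  · exact mul_pos_of_neg_of_neg (sub_neg.2 (hφ h)) (sub_neg.2 h)
  · exact mul_pos (sub_pos.2 (hφ h)) (sub_pos.2 h)

lemma StrictAnti.sub_mul_sub_nonneg (hφ : StrictAnti φ) (x y : R) :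
    0 ≤ (φ y - φ x) * (x - y) := by
  rcases eq_or_ne x y with rfl | hxy
  · simp
  · exact (hφ.sub_mul_sub_pos hxy).le

lemma StrictAnti.eq_of_sub_mul_sub_eq_zero (hφ : StrictAnti φ) {x y : R}
    (h : (φ y - φ x) * (x - y) = 0) : x = y := by
  by_contra hxy
  exact (hφ.sub_mul_sub_pos hxy).ne' h

end StrictAnti

namespace Function.Periodic

lemma intervalIntegral_eq_zero_of_antisymm {g : ℝ → ℝ} {T : ℝ} (hg : Periodic g T) {c : ℝ}
    (hanti : ∀ k, g (c - k) = -g k) (t : ℝ) :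
    ∫ k in t..t + T, g k = 0 := by
  have hreflect : ∫ k in t..t + T, g (c - k) = ∫ k in t..t + T, g k := by
    rw [integral_comp_sub_left, show c - t = c - (t + T) + T by ring,
      hg.intervalIntegral_add_eq (c - (t + T)) t]
  simp only [hanti, integral_neg] at hreflect
  linarith

lemma eq_zero_of_nonneg_of_intervalIntegral_eq_zero {Q : ℝ → ℝ} {T : ℝ} (hQ : Periodic Q T)
    (hT : 0 < T) (hcont : Continuous Q) (hnonneg : ∀ k, 0 ≤ Q k) {t : ℝ}
    (hint : ∫ k in t..t + T, Q k = 0) : Q = 0 := by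
  funext k
  by_contra hne
  have hpos : (∫ _ in k..k + T, (0 : ℝ)) < ∫ x in k..k + T, Q x :=
    integral_lt_integral_of_continuousOn_of_le_of_exists_lt (by linarith) continuousOn_const
      hcont.continuousOn (fun x _ ↦ hnonneg x)
      ⟨k, ⟨le_rfl, by linarith⟩, (hnonneg k).lt_of_ne (Ne.symm hne)⟩
  rw [integral_zero, hQ.intervalIntegral_add_eq k t, hint] at hpos
  exact hpos.false

end Function.Periodic

noncomputable def fermi (x : ℝ) : ℝ := (Real.exp x + 1)⁻¹

lemma fermi_strictAnti : StrictAnti fermi := fun _ _ h ↦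
  inv_strictAnti₀ (by positivity) (by simpa using Real.exp_lt_exp.2 h)

@[fun_prop]
lemma continuous_fermi : Continuous fermi :=
  (Real.continuous_exp.add continuous_const).inv₀ fun x ↦ (by positivity : Real.exp x + 1 ≠ 0)

noncomputable def fermiGap (x y : ℝ) : ℝ := (fermi y - fermi x) * (x - y)

lemma fermiGap_nonneg (x y : ℝ) : 0 ≤ fermiGap x y := fermi_strictAnti.sub_mul_sub_nonneg x y

lemma eq_of_fermiGap_eq_zero {x y : ℝ} (h : fermiGap x y = 0) : x = y :=
  fermi_strictAnti.eq_of_sub_mul_sub_eq_zero h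

@[fun_prop]
lemma Continuous.fermiGap {α : Type*} [TopologicalSpace α] {u v : α → ℝ} (hu : Continuous u)
    (hv : Continuous v) : Continuous fun t ↦ fermiGap (u t) (v t) := by
  unfold _root_.fermiGap
  fun_prop

noncomputable def density (f : ℝ → ℝ) (aup adown k : ℝ) : ℝ :=
  fermi (f k - aup) + fermi (f k - adown)

lemma hTraceDiff_eq_density_sub {f : ℝ → ℝ} (hsym : ∀ k, f k = -f (1/2 - k)) (aup adown k : ℝ) :
    hTraceDiff f aup adown k = density f aup adown k - density f aup adown (1/2 - k) := by
  have hf : f (1/2 - k) = -f k := by linarith [hsym k]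
  rw [density, density, hf, hTraceDiff, fermi, fermi, fermi, fermi]
  ring

lemma integral_sub_mul_density_sub_eq_zero {f₁ f₂ : ℝ → ℝ}
    (hper₁ : Function.Periodic f₁ 1) (hper₂ : Function.Periodic f₂ 1)
    (hsym₁ : ∀ k, f₁ k = -f₁ (1/2 - k)) (hsym₂ : ∀ k, f₂ k = -f₂ (1/2 - k))
    {a₁up a₁down a₂up a₂down : ℝ}
    (hh : ∀ k, hTraceDiff f₁ a₁up a₁down k = hTraceDiff f₂ a₂up a₂down k) :
    ∫ k in (-(1/2 : ℝ))..(-(1/2) + 1),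
      (f₁ k - f₂ k) * (density f₂ a₂up a₂down k - density f₁ a₁up a₁down k) = 0 := by
  have hper : Function.Periodic
      (fun k ↦ (f₁ k - f₂ k) * (density f₂ a₂up a₂down k - density f₁ a₁up a₁down k)) 1 :=
    fun k ↦ by simp only [density, hper₁ k, hper₂ k]
  refine hper.intervalIntegral_eq_zero_of_antisymm (c := 1/2) (fun k ↦ ?_) _
  have hk := hh k
  rw [hTraceDiff_eq_density_sub hsym₁, hTraceDiff_eq_density_sub hsym₂] at hk
  rw [hsym₁ k, hsym₂ k]
  linear_combination (f₁ (1/2 - k) - f₂ (1/2 - k)) * hk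

lemma integral_fermiGap_eq {f₁ f₂ : ℝ → ℝ} (hf₁ : Continuous f₁) (hf₂ : Continuous f₂)
    {a₁ a₂ : ℝ} (hocc : spinOcc f₁ a₁ = spinOcc f₂ a₂) :
    ∫ k in (-(1/2 : ℝ))..(1/2), fermiGap (f₁ k - a₁) (f₂ k - a₂)
      = ∫ k in (-(1/2 : ℝ))..(1/2), (fermi (f₂ k - a₂) - fermi (f₁ k - a₁)) * (f₁ k - f₂ k) := by
  have hsplit : ∀ k, fermiGap (f₁ k - a₁) (f₂ k - a₂)
      = (fermi (f₂ k - a₂) - fermi (f₁ k - a₁)) * (f₁ k - f₂ k)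
        - (a₁ - a₂) * (fermi (f₂ k - a₂) - fermi (f₁ k - a₁)) := fun k ↦ by
    rw [fermiGap]; ring
  have hocc' : ∫ k in (-(1/2 : ℝ))..(1/2), fermi (f₂ k - a₂) - fermi (f₁ k - a₁) = 0 := by
    rw [integral_sub (Continuous.intervalIntegrable (by fun_prop) _ _)
      (Continuous.intervalIntegrable (by fun_prop) _ _)]
    exact sub_eq_zero.2 hocc.symm
  simp_rw [hsplit]
  rw [integral_sub (Continuous.intervalIntegrable (by fun_prop) _ _)
    (Continuous.intervalIntegrable (by fun_prop) _ _), integral_const_mul, hocc', mul_zero,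
    sub_zero]

lemma integral_fermiGap_add_eq_zero {f₁ f₂ : ℝ → ℝ} (hf₁ : Continuous f₁) (hf₂ : Continuous f₂)
    (hper₁ : Function.Periodic f₁ 1) (hper₂ : Function.Periodic f₂ 1)
    (hsym₁ : ∀ k, f₁ k = -f₁ (1/2 - k)) (hsym₂ : ∀ k, f₂ k = -f₂ (1/2 - k))
    {a₁up a₁down a₂up a₂down : ℝ}
    (hh : ∀ k, hTraceDiff f₁ a₁up a₁down k = hTraceDiff f₂ a₂up a₂down k)
    (hup : spinOcc f₁ a₁up = spinOcc f₂ a₂up) (hdown : spinOcc f₁ a₁down = spinOcc f₂ a₂down) :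
    ∫ k in (-(1/2 : ℝ))..(-(1/2) + 1),
      fermiGap (f₁ k - a₁up) (f₂ k - a₂up) + fermiGap (f₁ k - a₁down) (f₂ k - a₂down) = 0 := by
  rw [← integral_sub_mul_density_sub_eq_zero hper₁ hper₂ hsym₁ hsym₂ hh,
    show -(1/2 : ℝ) + 1 = 1/2 by norm_num]
  rw [integral_add (Continuous.intervalIntegrable (by fun_prop) _ _)
      (Continuous.intervalIntegrable (by fun_prop) _ _),
    integral_fermiGap_eq hf₁ hf₂ hup, integral_fermiGap_eq hf₁ hf₂ hdown,
    ← integral_add (Continuous.intervalIntegrable (by fun_prop) _ _)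
      (Continuous.intervalIntegrable (by fun_prop) _ _)]
  exact integral_congr fun k _ ↦ by rw [density, density]; ring

lemma eq_zero_at_quarter {f : ℝ → ℝ} (hsym : ∀ k, f k = -f (1/2 - k)) : f (1/4) = 0 := by
  linarith [hsym (1/4), show (1/2 : ℝ) - 1/4 = 1/4 by norm_num]

theorem stmt_11 (f₁ f₂ : ℝ → ℝ) (hf₁ : Continuous f₁) (hf₂ : Continuous f₂)
    (hper₁ : Function.Periodic f₁ 1) (hper₂ : Function.Periodic f₂ 1)
    (hsym₁ : ∀ k : ℝ, f₁ k = -f₁ (1/2 - k)) (hsym₂ : ∀ k : ℝ, f₂ k = -f₂ (1/2 - k))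
    (a₁up a₁down a₂up a₂down : ℝ)
    (hh : ∀ k : ℝ, hTraceDiff f₁ a₁up a₁down k = hTraceDiff f₂ a₂up a₂down k)
    (hup : spinOcc f₁ a₁up = spinOcc f₂ a₂up)
    (hdown : spinOcc f₁ a₁down = spinOcc f₂ a₂down) :
    f₁ = f₂ ∧ a₁up = a₂up ∧ a₁down = a₂down := by
  have hQ : (fun k ↦ fermiGap (f₁ k - a₁up) (f₂ k - a₂up)
      + fermiGap (f₁ k - a₁down) (f₂ k - a₂down)) = 0 := by
    refine Function.Periodic.eq_zero_of_nonneg_of_intervalIntegral_eq_zero (fun k ↦ ?_) one_pos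
      (by fun_prop) (fun k ↦ add_nonneg (fermiGap_nonneg _ _) (fermiGap_nonneg _ _))
      (integral_fermiGap_add_eq_zero hf₁ hf₂ hper₁ hper₂ hsym₁ hsym₂ hh hup hdown)
    simp only [hper₁ k, hper₂ k]
  have hshift : ∀ k, f₁ k - a₁up = f₂ k - a₂up ∧ f₁ k - a₁down = f₂ k - a₂down := fun k ↦ by
    obtain ⟨hu, hd⟩ := (add_eq_zero_iff_of_nonneg (fermiGap_nonneg _ _)
      (fermiGap_nonneg _ _)).1 (congrFun hQ k)
    exact ⟨eq_of_fermiGap_eq_zero hu, eq_of_fermiGap_eq_zero hd⟩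
  obtain ⟨haup, hadown⟩ := hshift (1/4)
  rw [eq_zero_at_quarter hsym₁, eq_zero_at_quarter hsym₂] at haup hadown
  exact ⟨funext fun k ↦ by linarith [(hshift k).1], by linarith, by linarith⟩
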